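/- On h(n) the following commutation relations hold: Fₙ ∘ j(n) = j(n) ∘ Fₙ, Fₙ ∘ b(n) = b(n) ∘ Fₙ, and (j(n) ∘ Fₙ) ∘ t(n) = t(n) ∘ (j(n) ∘ Fₙ). -/

import Mathlib

noncomputable section

abbrev SL2Z := Matrix.SpecialLinearGroup (Fin 2) ℤ

def Lmat : SL2Z := ⟨!![1, 1; 0, 1], by decide⟩
def Rmat : SL2Z := ⟨!![1, 0; 1, 1], by decide⟩
def Jmat : SL2Z := ⟨!![0, 1; -1, 0], by decide⟩
def Imat : SL2Z := ⟨!![-1, 0; 0, -1], by decide⟩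

/-- h(n): the complex functions on (ℤ/nℤ)². -/
abbrev hSp (n : ℕ) := (Fin 2 → ZMod n) → ℂ

/-- Reduction of SL(2,ℤ) mod n. -/
def redMap (n : ℕ) : SL2Z →* Matrix.SpecialLinearGroup (Fin 2) (ZMod n) :=
  Matrix.SpecialLinearGroup.map (Int.castRingHom (ZMod n))

/-- The permutation representation of SL(2,ℤ) on h(n): (ρₙ(g)f)(x) = f(g⁻¹x). -/
def repN (n : ℕ) (g : SL2Z) : Module.End ℂ (hSp n) :=
  LinearMap.funLeft ℂ ℂ (fun x =>
    Matrix.mulVec ((redMap n g⁻¹) : Matrix (Fin 2) (Fin 2) (ZMod n)) x)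

/-- t(n) = (𝐥 + 𝐫)/2. -/
def tOp (n : ℕ) : Module.End ℂ (hSp n) := (2 : ℂ)⁻¹ • (repN n Lmat + repN n Rmat)

/-- j(n) = ρₙ(J). -/
def jOp (n : ℕ) : Module.End ℂ (hSp n) := repN n Jmat

/-- b(n) = (1/3)(𝐢 − 𝐫⁻¹𝐥 − 𝐥⁻¹𝐫 − 𝐥𝐫⁻¹ − 𝐫𝐥⁻¹). -/
def bOp (n : ℕ) : Module.End ℂ (hSp n) :=
  (3 : ℂ)⁻¹ • (repN n Imat - repN n Rmat⁻¹ * repN n Lmat - repN n Lmat⁻¹ * repN n Rmat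
    - repN n Lmat * repN n Rmat⁻¹ - repN n Rmat * repN n Lmat⁻¹)

/-- The unitary Fourier transform Fₙ on h(n):
(Fₙf)(ℓ) = n⁻¹ Σ_k exp(−2πi(k₁ℓ₁ + k₂ℓ₂)/n) f(k), using integer lifts. -/
def fourOp (n : ℕ) [NeZero n] : Module.End ℂ (hSp n) :=
  Matrix.mulVecLin (Matrix.of fun ℓ k : Fin 2 → ZMod n =>
    (n : ℂ)⁻¹ * Complex.exp (-(2 * Real.pi * Complex.I) *
      (((k 0).val * (ℓ 0).val + (k 1).val * (ℓ 1).val : ℕ) : ℂ) / (n : ℂ)))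

/-! The Fourier transform intertwines `ρₙ(g)` with `ρₙ((gᵀ)⁻¹)`, because `(g k) ⬝ ℓ = k ⬝ (gᵀ ℓ)`,
and on `SL(2)` the contragredient `g ↦ (gᵀ)⁻¹` is conjugation by `J`. Since `J² = -1` is central,
`j(n) ∘ Fₙ` therefore commutes with every `ρₙ(g)`, hence with `t(n)`; `J` is fixed by conjugation
with itself; and conjugation by `J` (sending `L ↦ R⁻¹`, `R ↦ L⁻¹`) fixes `-1` and swaps the terms
of `b(n)` in pairs. -/

open Matrix Complex

lemma Imat_eq_neg_one : Imat = -1 := by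
  ext i j; fin_cases i <;> fin_cases j <;> rfl

lemma Jmat_mul_Jmat : Jmat * Jmat = -1 := by
  ext i j; fin_cases i <;> fin_cases j <;> rfl

lemma Jmat_inv : Jmat⁻¹ = -Jmat :=
  inv_eq_of_mul_eq_one_right (by rw [mul_neg, Jmat_mul_Jmat, neg_neg])

lemma coe_conj_Jmat_inv (g : SL2Z) :
    ((MulAut.conj Jmat g⁻¹ : SL2Z) : Matrix (Fin 2) (Fin 2) ℤ) =
      (g : Matrix (Fin 2) (Fin 2) ℤ)ᵀ := by
  rw [MulAut.conj_apply, Jmat_inv]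
  change !![0, 1; -1, 0] * adjugate (g : Matrix (Fin 2) (Fin 2) ℤ) * -!![0, 1; -1, 0] = _
  rw [adjugate_fin_two]
  ext i j
  fin_cases i <;> fin_cases j <;> simp

lemma conj_Jmat_conj_Jmat (g : SL2Z) : MulAut.conj Jmat (MulAut.conj Jmat g) = g := by
  rw [← MulAut.mul_apply, ← map_mul, Jmat_mul_Jmat, MulAut.conj_apply]
  simp

lemma Jmat_mul_conj_Jmat (g : SL2Z) : Jmat * MulAut.conj Jmat g = g * Jmat := by
  rw [MulAut.conj_apply, Jmat_inv, ← mul_assoc, ← mul_assoc, Jmat_mul_Jmat, neg_one_mul, mul_neg,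
    neg_mul, neg_neg]

lemma conj_Jmat_Jmat : MulAut.conj Jmat Jmat = Jmat := by
  rw [MulAut.conj_apply, mul_inv_cancel_right]

lemma conj_Jmat_Imat : MulAut.conj Jmat Imat = Imat := by
  simp [MulAut.conj_apply, Imat_eq_neg_one]

lemma conj_Jmat_inv_Lmat : MulAut.conj Jmat Lmat⁻¹ = Rmat := by
  ext i j
  rw [coe_conj_Jmat_inv]
  fin_cases i <;> fin_cases j <;> rfl

lemma conj_Jmat_inv_Rmat : MulAut.conj Jmat Rmat⁻¹ = Lmat := by
  ext i j
  rw [coe_conj_Jmat_inv]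
  fin_cases i <;> fin_cases j <;> rfl

lemma conj_Jmat_Lmat : MulAut.conj Jmat Lmat = Rmat⁻¹ := by
  rw [← conj_Jmat_inv_Lmat, map_inv, inv_inv]

lemma conj_Jmat_Rmat : MulAut.conj Jmat Rmat = Lmat⁻¹ := by
  rw [← conj_Jmat_inv_Rmat, map_inv, inv_inv]

section Representation

variable {n : ℕ}

lemma repN_mul (g h : SL2Z) : repN n (g * h) = repN n g * repN n h := by
  refine LinearMap.ext fun f => funext fun x => ?_
  simp only [repN, LinearMap.funLeft_apply, Module.End.mul_apply, _root_.mul_inv_rev, map_mul,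
    mulVec_mulVec]
  rfl

lemma bOp_eq_sub_conj_pairs : bOp n = (3 : ℂ)⁻¹ • (repN n Imat
    - (repN n (Rmat⁻¹ * Lmat) + repN n (MulAut.conj Jmat (Rmat⁻¹ * Lmat)))
    - (repN n (Lmat⁻¹ * Rmat) + repN n (MulAut.conj Jmat (Lmat⁻¹ * Rmat)))) := by
  simp only [map_mul, conj_Jmat_inv_Lmat, conj_Jmat_inv_Rmat, conj_Jmat_Lmat, conj_Jmat_Rmat,
    repN_mul, bOp]
  congr 1
  abel

lemma redMap_mul_redMap_inv (g : SL2Z) :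
    (redMap n g : Matrix (Fin 2) (Fin 2) (ZMod n)) * (redMap n g⁻¹ : Matrix (Fin 2) (Fin 2) (ZMod n))
      = 1 :=
  congrArg Subtype.val (by rw [← map_mul, mul_inv_cancel, map_one] : redMap n g * redMap n g⁻¹ = 1)

lemma coe_redMap_conj_Jmat_inv (g : SL2Z) :
    (redMap n (MulAut.conj Jmat g)⁻¹ : Matrix (Fin 2) (Fin 2) (ZMod n)) =
      (redMap n g : Matrix (Fin 2) (Fin 2) (ZMod n))ᵀ := by
  rw [← map_inv]
  change ((MulAut.conj Jmat g⁻¹ : SL2Z) : Matrix (Fin 2) (Fin 2) ℤ).map _ = _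
  rw [coe_conj_Jmat_inv]
  rfl

end Representation

section Fourier

variable {n : ℕ} [NeZero n]

lemma stdAddChar_neg_natCast (m : ℕ) :
    ZMod.stdAddChar (-(m : ZMod n)) = exp (-(2 * Real.pi * I) * m / n) := by
  have h := ZMod.stdAddChar_coe (N := n) (-(m : ℤ))
  push_cast at h
  rw [h]
  ring_nf

lemma fourOp_apply (f : hSp n) (ℓ : Fin 2 → ZMod n) :
    fourOp n f ℓ = (n : ℂ)⁻¹ * ∑ k, ZMod.stdAddChar (-(k ⬝ᵥ ℓ)) * f k := by
  simp only [fourOp, mulVecLin_apply, mulVec, dotProduct, of_apply, Finset.mul_sum]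
  refine Finset.sum_congr rfl fun k _ => ?_
  rw [← stdAddChar_neg_natCast, mul_assoc]
  simp [Fin.sum_univ_two]

lemma fourOp_mul_funLeft_mulVec {A B : Matrix (Fin 2) (Fin 2) (ZMod n)} (hAB : A * B = 1) :
    fourOp n * LinearMap.funLeft ℂ ℂ (B *ᵥ ·) = LinearMap.funLeft ℂ ℂ (Aᵀ *ᵥ ·) * fourOp n := by
  let e : (Fin 2 → ZMod n) ≃ (Fin 2 → ZMod n) :=
    { toFun := (B *ᵥ ·), invFun := (A *ᵥ ·)
      left_inv := fun x => by simp only [mulVec_mulVec, hAB, one_mulVec]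
      right_inv := fun x => by simp only [mulVec_mulVec, mul_eq_one_comm.mp hAB, one_mulVec] }
  have dot_eq (k ℓ : Fin 2 → ZMod n) : B *ᵥ k ⬝ᵥ Aᵀ *ᵥ ℓ = k ⬝ᵥ ℓ := by
    rw [dotProduct_mulVec, vecMul_transpose, mulVec_mulVec, hAB, one_mulVec]
  refine LinearMap.ext fun f => funext fun ℓ => ?_
  simp only [Module.End.mul_apply, LinearMap.funLeft_apply, fourOp_apply]
  congr 1
  exact Fintype.sum_equiv e _ _ fun k => by rw [show e k = B *ᵥ k from rfl, dot_eq]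

lemma fourOp_mul_repN (g : SL2Z) :
    fourOp n * repN n g = repN n (MulAut.conj Jmat g) * fourOp n := by
  rw [repN, repN, fourOp_mul_funLeft_mulVec (redMap_mul_redMap_inv g), coe_redMap_conj_Jmat_inv]

lemma commute_fourOp_repN_of_conj_Jmat_eq {g : SL2Z} (hg : MulAut.conj Jmat g = g) :
    Commute (fourOp n) (repN n g) := by
  rw [Commute, SemiconjBy, fourOp_mul_repN, hg]

lemma commute_fourOp_repN_add_repN_conj_Jmat (g : SL2Z) :
    Commute (fourOp n) (repN n g + repN n (MulAut.conj Jmat g)) := by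
  rw [Commute, SemiconjBy, mul_add, add_mul, fourOp_mul_repN, fourOp_mul_repN, conj_Jmat_conj_Jmat,
    add_comm]

lemma commute_jOp_mul_fourOp_repN (g : SL2Z) : Commute (jOp n * fourOp n) (repN n g) := by
  rw [Commute, SemiconjBy, mul_assoc, fourOp_mul_repN, jOp, ← mul_assoc, ← repN_mul,
    Jmat_mul_conj_Jmat, repN_mul, mul_assoc]

end Fourier

/-- On h(n): Fₙ∘j(n) = j(n)∘Fₙ, Fₙ∘b(n) = b(n)∘Fₙ, and j(n)∘Fₙ commutes with t(n). -/
theorem fourier_commutation (n : ℕ) [NeZero n] :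
    fourOp n * jOp n = jOp n * fourOp n ∧
    fourOp n * bOp n = bOp n * fourOp n ∧
    (jOp n * fourOp n) * tOp n = tOp n * (jOp n * fourOp n) := by
  refine ⟨commute_fourOp_repN_of_conj_Jmat_eq conj_Jmat_Jmat, ?_, ?_⟩
  · rw [bOp_eq_sub_conj_pairs]
    exact (((commute_fourOp_repN_of_conj_Jmat_eq conj_Jmat_Imat).sub_right
      (commute_fourOp_repN_add_repN_conj_Jmat _)).sub_right
      (commute_fourOp_repN_add_repN_conj_Jmat _)).smul_right _
  · exact ((commute_jOp_mul_fourOp_repN Lmat).add_right (commute_jOp_mul_fourOp_repN Rmat)).smul_right _
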